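/- For any finite tree T on n nodes with maximum degree Δ ≥ 1, the number of fixed points of the minority process on T is at most 2·F_{n-⌈Δ/2⌉}, where F_k is the k-th Fibonacci number. -/

import Mathlib

open SimpleGraph Finset
open scoped Classical

variable {V : Type*}

/-- Number of neighbors of `v` with the same color as `v`. -/
noncomputable def sameCount (G : SimpleGraph V) [Fintype V] (c : V → Bool) (v : V) : ℕ :=
  ((G.neighborFinset v).filter fun u => c u = c v).card

/-- Number of neighbors of `v` with the opposite color. -/
noncomputable def diffCount (G : SimpleGraph V) [Fintype V] (c : V → Bool) (v : V) : ℕ :=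
  ((G.neighborFinset v).filter fun u => c u ≠ c v).card

/-- One round of the minority process. -/
noncomputable def minStep (G : SimpleGraph V) [Fintype V] (c : V → Bool) : V → Bool :=
  fun v => if sameCount G c v ≤ diffCount G c v then c v else !c v

/-- One round of the majority process. -/
noncomputable def majStep (G : SimpleGraph V) [Fintype V] (c : V → Bool) : V → Bool :=
  fun v => if diffCount G c v ≤ sameCount G c v then c v else !c v

/-- Number of edges of `F` incident to `v`. -/
noncomputable def incCount (F : Finset (Sym2 V)) (v : V) : ℕ :=
  (F.filter fun e => v ∈ e).card

/-- The monochromatic edges of a coloring. -/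
noncomputable def monoEdges (G : SimpleGraph V) [Fintype V] (c : V → Bool) : Finset (Sym2 V) :=
  G.edgeFinset.filter fun e => ∀ x ∈ e, ∀ y ∈ e, c x = c y

/-- The multichromatic edges of a coloring. -/
noncomputable def multiEdges (G : SimpleGraph V) [Fintype V] (c : V → Bool) : Finset (Sym2 V) :=
  G.edgeFinset.filter fun e => ∃ x ∈ e, ∃ y ∈ e, c x ≠ c y

/-! A fixed point `c` of the minority process has at most `⌊deg v / 2⌋` monochromatic edges at
every vertex `v`, and on a connected graph `c` is determined by its colour at one vertex together
with its set of monochromatic edges. Hence there are at most `2 · N` fixed points, where `N` counts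
the edge sets `M` with `deg_M v ≤ ⌊deg v / 2⌋` for all `v`.

In a forest, edge sets obeying capacities `κ` number at most `F (∑ κ + 1)`: for a leaf edge
`vw`, the sets avoiding it are counted with `κ v` lowered to `0` (`v` is isolated once `vw` is
gone), and those containing it with moreover `κ w` lowered by one, which is the Fibonacci
recursion. Finally, in a tree `∑ deg = 2 (n - 1)` and all degrees are positive (for `n ≥ 2`), so
`∑ ⌊deg / 2⌋ ≤ n - 1 - ⌈Δ / 2⌉`.
-/

namespace SimpleGraph

variable {G : SimpleGraph V}

lemma IsAcyclic.exists_adj_forall_adj_eq [Finite V] (hG : G.IsAcyclic) {x y : V}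
    (hxy : G.Adj x y) : ∃ v w, G.Adj v w ∧ ∀ z, G.Adj v z → z = w := by
  have : Nonempty V := ⟨x⟩
  obtain ⟨u, v, p, hp, hmax⟩ := Walk.exists_isPath_forall_isPath_length_le_length G
  have hnil : ¬p.Nil := by
    intro h
    have := hmax _ _ _ (Path.singleton hxy).2
    simp [Walk.length_eq_zero_iff.mpr h, Path.singleton] at this
  refine ⟨u, p.snd, p.adj_snd hnil, fun z hz => hG.eq_snd_of_adj_start hp hz ?_⟩
  by_contra hzp
  have := hmax _ _ _ (hp.cons hzp (h := hz.symm))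
  simp at this

end SimpleGraph

lemma incCount_mono {M E : Finset (Sym2 V)} (h : M ⊆ E) (v : V) :
    incCount M v ≤ incCount E v :=
  card_le_card (filter_subset_filter _ h)

lemma incCount_erase_add_one {E : Finset (Sym2 V)} {e : Sym2 V} {v : V} (he : e ∈ E)
    (hv : v ∈ e) : incCount (E.erase e) v + 1 = incCount E v := by
  rw [incCount, filter_erase, card_erase_add_one (mem_filter.mpr ⟨he, hv⟩), incCount]

lemma exists_leaf_edge {G : SimpleGraph V} [Finite V] (hG : G.IsAcyclic)
    {E : Finset (Sym2 V)} (hE : ↑E ⊆ G.edgeSet) (hne : E.Nonempty) :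
    ∃ v w, v ≠ w ∧ E.filter (v ∈ ·) = {s(v, w)} := by
  set H := fromEdgeSet (E : Set (Sym2 V))
  have hH : H.IsAcyclic := hG.anti ((fromEdgeSet_le G).mpr fun e he => hE he.1)
  have hadj : ∀ {a b}, s(a, b) ∈ E → H.Adj a b := fun hab =>
    (fromEdgeSet_adj _).mpr ⟨hab, (hE hab).ne⟩
  obtain ⟨⟨x, y⟩, hxy⟩ := hne
  obtain ⟨v, w, hvw, hleaf⟩ := hH.exists_adj_forall_adj_eq (hadj hxy)
  refine ⟨v, w, hvw.ne, Finset.ext fun f => ⟨fun hf => ?_, fun hf => ?_⟩⟩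
  · obtain ⟨hfE, hvf⟩ := mem_filter.mp hf
    obtain ⟨u, rfl⟩ := Sym2.mem_iff_exists.mp hvf
    rw [hleaf u (hadj hfE), mem_singleton]
  · rw [mem_singleton.mp hf]
    exact mem_filter.mpr ⟨((fromEdgeSet_adj _).mp hvw).1, Sym2.mem_mk_left v w⟩

noncomputable def cappedSubsets (E : Finset (Sym2 V)) (κ : V → ℕ) : Finset (Finset (Sym2 V)) :=
  E.powerset.filter fun M => ∀ v, incCount M v ≤ κ v

lemma mem_cappedSubsets {E M : Finset (Sym2 V)} {κ : V → ℕ} :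
    M ∈ cappedSubsets E κ ↔ M ⊆ E ∧ ∀ v, incCount M v ≤ κ v := by
  rw [cappedSubsets, mem_filter, mem_powerset]

lemma cappedSubsets_empty (κ : V → ℕ) : cappedSubsets ∅ κ = {∅} := by
  ext M
  simp only [mem_cappedSubsets, subset_empty, mem_singleton]
  refine ⟨And.left, ?_⟩
  rintro rfl
  exact ⟨rfl, fun v => by simp [incCount]⟩

lemma cappedSubsets_subset_erase {E : Finset (Sym2 V)} {e : Sym2 V} {v : V} {κ : V → ℕ}
    (hv : v ∈ e) (hκ : κ v = 0) :
    cappedSubsets E κ ⊆ cappedSubsets (E.erase e) κ := by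
  intro M hM
  obtain ⟨hME, hMκ⟩ := mem_cappedSubsets.mp hM
  have heM : e ∉ M := fun heM => by
    have := incCount_erase_add_one heM hv
    have := hMκ v
    omega
  exact mem_cappedSubsets.mpr ⟨subset_erase.mpr ⟨hME, heM⟩, hMκ⟩

lemma card_cappedSubsets_le_of_leaf {E : Finset (Sym2 V)} {v w : V} (hvw : v ≠ w)
    (hleaf : E.filter (v ∈ ·) = {s(v, w)}) (κ : V → ℕ) :
    #(cappedSubsets E κ) ≤
      #(cappedSubsets (E.erase s(v, w)) (Function.update κ v 0)) +
      #(cappedSubsets (E.erase s(v, w))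
        (Function.update (Function.update κ v 0) w (κ w - 1))) := by
  set e := s(v, w)
  have hv_iso : ∀ M ⊆ E.erase e, incCount M v = 0 := fun M hM => by
    have h0 : incCount (E.erase e) v = 0 := by
      rw [incCount, filter_erase, hleaf, erase_singleton, card_empty]
    exact Nat.eq_zero_of_le_zero (h0 ▸ incCount_mono hM v)
  rw [← card_filter_add_card_filter_not (fun M => e ∉ M)]
  refine add_le_add (card_le_card fun M hM => ?_) ?_
  · obtain ⟨hMκ, heM⟩ := mem_filter.mp hM
    obtain ⟨hME, hMκ⟩ := mem_cappedSubsets.mp hMκ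
    have hME' : M ⊆ E.erase e := subset_erase.mpr ⟨hME, heM⟩
    refine mem_cappedSubsets.mpr ⟨hME', fun x => ?_⟩
    rcases eq_or_ne x v with rfl | hxv
    · simp [hv_iso M hME']
    · simpa [hxv] using hMκ x
  · refine card_le_card_of_injOn (fun M => M.erase e) (fun M hM => ?_)
      (fun M hM N hN => erase_injOn' e (by simpa using (mem_filter.mp hM).2)
        (by simpa using (mem_filter.mp hN).2))
    obtain ⟨hMκ, heM⟩ := mem_filter.mp hM
    simp only [not_not] at heM
    obtain ⟨hME, hMκ⟩ := mem_cappedSubsets.mp hMκ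
    have hME' : M.erase e ⊆ E.erase e := erase_subset_erase e hME
    refine mem_cappedSubsets.mpr ⟨hME', fun x => ?_⟩
    rcases eq_or_ne x w with rfl | hxw
    · have := incCount_erase_add_one heM (Sym2.mem_mk_right v x)
      have := hMκ x
      simp only [Function.update_self]
      omega
    rcases eq_or_ne x v with rfl | hxv
    · simp [hv_iso _ hME']
    · simpa [hxw, hxv] using (incCount_mono (erase_subset e M) x).trans (hMκ x)

lemma sum_update_lt [Fintype V] {κ : V → ℕ} {v : V} {b : ℕ} (hb : b < κ v) :
    ∑ x, Function.update κ v b x < ∑ x, κ x := by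
  refine sum_lt_sum (fun x _ => ?_) ⟨v, mem_univ v, by simpa using hb⟩
  rcases eq_or_ne x v with rfl | hxv
  · simpa using hb.le
  · simp [hxv]

lemma fib_add_fib_le {a b n : ℕ} (ha : a + 1 ≤ n) (hb : b + 2 ≤ n) :
    Nat.fib (a + 1) + Nat.fib (b + 1) ≤ Nat.fib (n + 1) := by
  obtain ⟨m, rfl⟩ : ∃ m, n = m + 2 := ⟨n - 2, by omega⟩
  rw [show m + 2 + 1 = m + 1 + 2 by ring, Nat.fib_add_two, add_comm]
  exact add_le_add (Nat.fib_mono (by omega)) (Nat.fib_mono (by omega))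

theorem card_cappedSubsets_le_fib [Fintype V] {G : SimpleGraph V} (hG : G.IsAcyclic)
    {E : Finset (Sym2 V)} (hE : ↑E ⊆ G.edgeSet) (κ : V → ℕ) :
    #(cappedSubsets E κ) ≤ Nat.fib (∑ v, κ v + 1) := by
  induction E using Finset.strongInduction generalizing κ with
  | H E ih =>
  rcases E.eq_empty_or_nonempty with rfl | hne
  · rw [cappedSubsets_empty, card_singleton]
    exact Nat.fib_pos.mpr (Nat.succ_pos _)
  obtain ⟨v, w, hvw, hleaf⟩ := exists_leaf_edge hG hE hne
  have he : s(v, w) ∈ E := (mem_filter.mp (hleaf ▸ mem_singleton_self _)).1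
  have ih' := ih _ (erase_ssubset he) ((coe_subset.mpr (erase_subset _ E)).trans hE)
  by_cases hκ : κ v = 0 ∨ κ w = 0
  · refine (card_le_card ?_).trans (ih' κ)
    rcases hκ with hκ | hκ
    exacts [cappedSubsets_subset_erase (Sym2.mem_mk_left v w) hκ,
      cappedSubsets_subset_erase (Sym2.mem_mk_right v w) hκ]
  obtain ⟨hκv, hκw⟩ := not_or.mp hκ
  have h₁ := sum_update_lt (v := v) (Nat.pos_of_ne_zero hκv)
  have h₂ := sum_update_lt (κ := Function.update κ v 0) (v := w) (b := κ w - 1)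
    (by rw [Function.update_of_ne hvw.symm]; omega)
  calc #(cappedSubsets E κ) ≤ _ := card_cappedSubsets_le_of_leaf hvw hleaf κ
    _ ≤ _ := add_le_add (ih' _) (ih' _)
    _ ≤ _ := fib_add_fib_le (by omega) (by omega)

section FixedPoints

variable [Fintype V] {G : SimpleGraph V} {c c' : V → Bool}

lemma mk_mem_monoEdges_iff {u x : V} : s(u, x) ∈ monoEdges G c ↔ G.Adj u x ∧ c u = c x := by
  simp only [monoEdges, mem_filter, mem_edgeFinset, mem_edgeSet, Sym2.mem_iff]
  constructor
  · rintro ⟨hadj, h⟩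
    exact ⟨hadj, h u (Or.inl rfl) x (Or.inr rfl)⟩
  · rintro ⟨hadj, h⟩
    refine ⟨hadj, ?_⟩
    rintro a (rfl | rfl) b (rfl | rfl) <;> simp [h]

lemma incCount_monoEdges (v : V) : incCount (monoEdges G c) v = sameCount G c v := by
  refine (card_bij (fun u _ => s(v, u)) (fun u hu => ?_) (fun _ _ _ _ h => Sym2.congr_right.mp h)
    (fun e he => ?_)).symm
  · simp only [mem_filter, mem_neighborFinset] at hu
    exact mem_filter.mpr ⟨mk_mem_monoEdges_iff.mpr ⟨hu.1, hu.2.symm⟩, Sym2.mem_mk_left v u⟩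
  · obtain ⟨he, hv⟩ := mem_filter.mp he
    obtain ⟨u, rfl⟩ := Sym2.mem_iff_exists.mp hv
    obtain ⟨hadj, hc⟩ := mk_mem_monoEdges_iff.mp he
    exact ⟨u, mem_filter.mpr ⟨(mem_neighborFinset _ _ _).mpr hadj, hc.symm⟩, rfl⟩

lemma sameCount_add_diffCount (v : V) : sameCount G c v + diffCount G c v = G.degree v :=
  card_filter_add_card_filter_not _

lemma sameCount_le_diffCount_of_minStep_eq (h : minStep G c = c) (v : V) :
    sameCount G c v ≤ diffCount G c v := by
  by_contra hlt
  have := congrFun h v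
  simp [minStep, hlt] at this

lemma monoEdges_mem_cappedSubsets (h : minStep G c = c) :
    monoEdges G c ∈ cappedSubsets G.edgeFinset fun v => G.degree v / 2 := by
  refine mem_cappedSubsets.mpr ⟨filter_subset _ _, fun v => ?_⟩
  have := sameCount_le_diffCount_of_minStep_eq h v
  have := sameCount_add_diffCount (G := G) (c := c) v
  rw [incCount_monoEdges]
  omega

lemma SimpleGraph.Reachable.apply_eq_of_monoEdges_eq (hm : monoEdges G c = monoEdges G c')
    {u v : V} (huv : G.Reachable u v) (hu : c u = c' u) : c v = c' v := by
  obtain ⟨p⟩ := huv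
  induction p with
  | nil => exact hu
  | @cons a b _ hab _ ih =>
    have hsame : c a = c b ↔ c' a = c' b := by
      have h := mk_mem_monoEdges_iff (G := G) (c := c) (u := a) (x := b)
      rw [hm, mk_mem_monoEdges_iff, and_congr_right_iff] at h
      exact (h hab).symm
    apply ih
    revert hsame hu
    cases c a <;> cases c b <;> cases c' a <;> cases c' b <;> simp

lemma card_fixedPoints_le (hG : G.Connected) :
    Nat.card {c : V → Bool // minStep G c = c} ≤
      2 * #(cappedSubsets G.edgeFinset fun v => G.degree v / 2) := by
  obtain ⟨r⟩ := hG.nonempty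
  let F : {c : V → Bool // minStep G c = c} →
      Bool × cappedSubsets G.edgeFinset (fun v => G.degree v / 2) :=
    fun c => (c.1 r, ⟨monoEdges G c.1, monoEdges_mem_cappedSubsets c.2⟩)
  have hF : Function.Injective F := fun c c' h => by
    simp only [F, Prod.mk.injEq, Subtype.mk.injEq] at h
    exact Subtype.ext <| funext fun v =>
      (hG.preconnected r v).apply_eq_of_monoEdges_eq h.2 h.1
  simpa [Nat.card_eq_finsetCard] using Nat.card_le_card_of_injective F hF

end FixedPoints

lemma SimpleGraph.IsTree.sum_degree_div_two_add_lt [Fintype V] {G : SimpleGraph V}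
    (hG : G.IsTree) (v : V) :
    ∑ u, G.degree u / 2 + (G.degree v + 1) / 2 < Fintype.card V := by
  have hpos : ∀ u ∈ univ.erase v, 1 ≤ (G.degree u + 1) / 2 := fun u hu => by
    have : Nontrivial V := ⟨u, v, (mem_erase.mp hu).1⟩
    have := hG.connected.preconnected.degree_pos_of_nontrivial u
    omega
  have hceil : Fintype.card V - 1 + (G.degree v + 1) / 2 ≤ ∑ u, (G.degree u + 1) / 2 := by
    rw [← add_sum_erase _ _ (mem_univ v), add_comm]
    gcongr
    simpa [card_erase_of_mem] using card_nsmul_le_sum _ _ 1 hpos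
  have hsplit : ∑ u, G.degree u / 2 + ∑ u, (G.degree u + 1) / 2 = ∑ u, G.degree u := by
    rw [← sum_add_distrib]
    exact sum_congr rfl fun u _ => by omega
  have := hG.card_edgeFinset
  have := G.sum_degrees_eq_twice_card_edges
  have := Fintype.card_pos_iff.mpr hG.connected.nonempty
  omega

theorem stmt11_general [Fintype V] (G : SimpleGraph V) (hT : G.IsTree) (Δ : ℕ)
    (hΔ : Δ = Finset.univ.sup (fun v => G.degree v)) :
    Nat.card {c : V → Bool // minStep G c = c} ≤
      2 * Nat.fib (Fintype.card V - (Δ + 1) / 2) := by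
  set m := ∑ v, G.degree v / 2
  have hΔle : Δ ≤ 2 * (Fintype.card V - 1 - m) := hΔ ▸ Finset.sup_le fun v _ => by
    have := hT.sum_degree_div_two_add_lt v
    omega
  have hm : m < Fintype.card V :=
    (Nat.le_add_right _ _).trans_lt (hT.sum_degree_div_two_add_lt hT.connected.nonempty.some)
  calc Nat.card {c : V → Bool // minStep G c = c}
      ≤ 2 * #(cappedSubsets G.edgeFinset fun v => G.degree v / 2) :=
        card_fixedPoints_le hT.connected
    _ ≤ 2 * Nat.fib (m + 1) := by
        gcongr
        exact card_cappedSubsets_le_fib hT.isAcyclic (coe_edgeFinset G).le _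
    _ ≤ 2 * Nat.fib (Fintype.card V - (Δ + 1) / 2) := by
        gcongr
        omega

theorem stmt11 [Fintype V] (G : SimpleGraph V) (hT : G.IsTree) (Δ : ℕ)
    (hΔ : Δ = Finset.univ.sup (fun v => G.degree v)) (hΔ1 : 1 ≤ Δ) :
    Nat.card {c : V → Bool // minStep G c = c} ≤
      2 * Nat.fib (Fintype.card V - (Δ + 1) / 2) :=
  stmt11_general G hT Δ hΔ
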